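/- Fix n ≥ 3 and 4 ≤ t ≤ n, and let N be the Leibniz superalgebra H(0,…,0,β_t,0,…,0,0,0) with β_t = 1 (only the t-th parameter nonzero). Define d on N by d(e₁)=2e₁, d(e₂)=2(t-2)e₂, d(e_i)=2(i-1)e_i (3≤i≤n), d(y_i)=(2i-1)y_i (1≤i≤n). Then d is a non-nilpotent even derivation of N, and every even derivation d' of N satisfies d'(e₂) = 2(t-2)a₁ e₂ where 2a₁ is the coefficient of e₁ in d'(e₁). -/

import Mathlib

/-!
The map `d` is diagonal in the basis `e_k, y_k`, with weight `2`, `2(t-2)`, `2(k-1)` on `e₁`, `e₂`,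
`e_k` (`k ≥ 3`) and `2k-1` on `y_k`. Such a map is a derivation as soon as every product of two
basis vectors is a multiple of a basis vector whose weight is the sum of the two weights, which is
read off the multiplication table; and `d` has the eigenvalue `2`, so it is not nilpotent.

For an even derivation `d'`, let `A` be the `e₁`-coefficient of `d' e₁` and `c` the
`y₁`-coefficient of `d' y₁`. Applying `d'` to `[y_k, e₁] = y_{k+1}` shows that the
`y_k`-coefficient of `d' y_k` is `c + (k-1)A`. Applying it to `[e₂, y₁] = 0`, where `[e₂, ·]` kills
the odd part and `w ↦ [w, y₁]` is injective on even vectors without `e₂`-component, gives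
`d' e₂ = B e₂`. Applying it to `[y₁, e₂] = y_{t-1}` and comparing `y_{t-1}`-coefficients gives
`c + (t-2)A = c + B`.
-/

open Module Submodule Set

section General

variable {R M N : Type*} [CommRing R] [AddCommGroup M] [Module R M] [AddCommGroup N] [Module R N]

theorem leibniz_of_mem_eigenspace {br : M →ₗ[R] M →ₗ[R] M} {d : End R M} {x y : M} {a b : R}
    (hx : x ∈ d.eigenspace a) (hy : y ∈ d.eigenspace b) (hxy : br x y ∈ d.eigenspace (a + b)) :
    d (br x y) = br (d x) y + br x (d y) := by
  rw [End.mem_eigenspace_iff] at hx hy hxy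
  rw [hxy, hx, hy, map_smul, LinearMap.smul_apply, map_smul, add_smul]

theorem leibniz_of_basis {ι : Type*} (b : Basis ι R M) {br : M →ₗ[R] M →ₗ[R] M} {d : End R M}
    (h : ∀ i j, d (br (b i) (b j)) = br (d (b i)) (b j) + br (b i) (d (b j))) (u v : M) :
    d (br u v) = br (d u) v + br u (d v) :=
  LinearMap.congr_fun₂ (LinearMap.ext_basis (B := br.compr₂ d) (B' := br ∘ₗ d + br.compl₂ d) b b
    (by simpa using h)) u v

theorem Module.Basis.repr_eq_zero_of_mem_span {ι κ : Type*} (b : Basis ι R M) (f : κ → ι) {x : M}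
    (hx : x ∈ span R (range fun k => b (f k))) {i : ι} (hi : i ∉ range f) : b.repr x i = 0 := by
  rw [← Function.comp_def, range_comp] at hx
  by_contra h
  exact hi (b.mem_span_image.1 hx (Finsupp.mem_support_iff.2 h))

theorem Module.Basis.apply_eq_repr_smul_of_mem_span {ι κ : Type*} (b : Basis ι R M) (f : κ → ι)
    {x : M} (hx : x ∈ span R (range fun k => b (f k))) (φ : M →ₗ[R] N) {k₀ : κ}
    (hφ : ∀ k ≠ k₀, φ (b (f k)) = 0) : φ x = b.repr x (f k₀) • φ (b (f k₀)) := by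
  have hsum : φ x = (b.repr x).sum fun i c => c • φ (b i) := by
    conv_lhs => rw [← b.linearCombination_repr x]
    simp [Finsupp.linearCombination_apply, map_finsuppSum]
  rw [hsum]
  refine Finset.sum_eq_single (f k₀) (fun i hi hik₀ => ?_) (fun h => ?_)
  · obtain ⟨k, rfl⟩ : i ∈ range f := by
      by_contra h
      exact Finsupp.mem_support_iff.1 hi (b.repr_eq_zero_of_mem_span f hx h)
    exact (congrArg _ (hφ k fun h => hik₀ (h ▸ rfl))).trans (smul_zero _)
  · simp [Finsupp.notMem_support_iff.1 h]

structure IsEvenDerivation {ι κ : Type*} (b : Basis (ι ⊕ κ) R M)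
    (br : M →ₗ[R] M →ₗ[R] M) (d : End R M) : Prop where
  mapsTo_even : ∀ x ∈ span R (range fun i => b (Sum.inl i)),
    d x ∈ span R (range fun i => b (Sum.inl i))
  mapsTo_odd : ∀ x ∈ span R (range fun j => b (Sum.inr j)),
    d x ∈ span R (range fun j => b (Sum.inr j))
  leibniz : ∀ u v : M, d (br u v) = br (d u) v + br u (d v)

end General

/-- `eN k` and `yN k` are the basis vectors `e_k` and `y_k` of `H(0,…,0,β_t = 1,0,…,0,0,0)` for
`1 ≤ k ≤ n`, extended by `0` to all other `k`, and `br` is its bracket. -/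
structure IsHTable {K V : Type*} [Field K] [AddCommGroup V] [Module K V] (n t : ℕ)
    (bas : Basis (Fin n ⊕ Fin n) K V) (eN yN : ℕ → V) (br : V →ₗ[K] V →ₗ[K] V) : Prop where
  eN_eq : ∀ k (h : 1 ≤ k ∧ k ≤ n), eN k = bas (Sum.inl ⟨k - 1, by omega⟩)
  eN_eq_zero : ∀ k, ¬(1 ≤ k ∧ k ≤ n) → eN k = 0
  yN_eq : ∀ k (h : 1 ≤ k ∧ k ≤ n), yN k = bas (Sum.inr ⟨k - 1, by omega⟩)
  yN_eq_zero : ∀ k, ¬(1 ≤ k ∧ k ≤ n) → yN k = 0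
  br_e_e₁ : ∀ i, 1 ≤ i → i ≤ n →
    br (eN i) (eN 1) = if i = 1 then eN 3 else if i = 2 then 0 else eN (i + 1)
  br_e_e₂ : ∀ i, 1 ≤ i → i ≤ n →
    br (eN i) (eN 2) = if i = 1 then eN t else if i = 2 then 0 else eN (i + t - 2)
  br_e_e : ∀ i j, 1 ≤ i → i ≤ n → 3 ≤ j → j ≤ n → br (eN i) (eN j) = 0
  br_y_e₁ : ∀ j, 1 ≤ j → j ≤ n → br (yN j) (eN 1) = yN (j + 1)
  br_y_e₂ : ∀ j, 1 ≤ j → j ≤ n →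
    br (yN j) (eN 2) = if j = 1 then yN (t - 1) else yN (j + t - 2)
  br_y_e : ∀ j i, 1 ≤ j → j ≤ n → 3 ≤ i → i ≤ n → br (yN j) (eN i) = 0
  br_e_y₁ : ∀ i, 1 ≤ i → i ≤ n → br (eN i) (yN 1) =
    if i = 1 then (1 / 2 : K) • yN 2 else if i = 2 then 0 else (1 / 2 : K) • yN i
  br_e_y : ∀ i j, 1 ≤ i → i ≤ n → 2 ≤ j → j ≤ n → br (eN i) (yN j) = 0
  br_y_y₁ : ∀ j, 1 ≤ j → j ≤ n → br (yN j) (yN 1) = if j = 1 then eN 1 else eN (j + 1)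
  br_y_y : ∀ j k, 1 ≤ j → j ≤ n → 2 ≤ k → k ≤ n → br (yN j) (yN k) = 0

namespace IsHTable

variable {K V : Type*} [Field K] [AddCommGroup V] [Module K V] {n t : ℕ}
  {bas : Basis (Fin n ⊕ Fin n) K V} {eN yN : ℕ → V} {br : V →ₗ[K] V →ₗ[K] V} {d : End K V}
  {a b : ℕ}

local notation "V₀" => span K (range fun i => bas (Sum.inl i))
local notation "V₁" => span K (range fun j => bas (Sum.inr j))

theorem basis_inl (H : IsHTable n t bas eN yN br) (i : Fin n) : bas (.inl i) = eN (i + 1) :=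
  (H.eN_eq (i + 1) ⟨by omega, by omega⟩).symm

theorem basis_inr (H : IsHTable n t bas eN yN br) (j : Fin n) : bas (.inr j) = yN (j + 1) :=
  (H.yN_eq (j + 1) ⟨by omega, by omega⟩).symm

def weightE (t k : ℕ) : ℕ := if k = 1 then 2 else if k = 2 then 2 * (t - 2) else 2 * (k - 1)

theorem eN_mem_eigenspace (H : IsHTable n t bas eN yN br) (ht : 2 ≤ t)
    (hde1 : d (eN 1) = (2 : K) • eN 1) (hde2 : d (eN 2) = (2 * ((t : K) - 2)) • eN 2)
    (hde : ∀ i, 3 ≤ i → i ≤ n → d (eN i) = (2 * ((i : K) - 1)) • eN i) (k : ℕ) (hk : 1 ≤ k) :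
    eN k ∈ d.eigenspace (weightE t k : K) := by
  rw [End.mem_eigenspace_iff]
  by_cases hkn : k ≤ n
  · rcases (by omega : k = 1 ∨ k = 2 ∨ 3 ≤ k) with rfl | rfl | hk3
    · simpa [weightE] using hde1
    · simpa [weightE, Nat.cast_sub ht] using hde2
    · simpa [weightE, show k ≠ 1 by omega, show k ≠ 2 by omega, Nat.cast_sub hk] using
        hde k hk3 hkn
  · simp [H.eN_eq_zero k (by omega)]

theorem yN_mem_eigenspace (H : IsHTable n t bas eN yN br)
    (hdy : ∀ i, 1 ≤ i → i ≤ n → d (yN i) = (2 * (i : K) - 1) • yN i) (k : ℕ) (hk : 1 ≤ k) :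
    yN k ∈ d.eigenspace ((2 * k - 1 : ℕ) : K) := by
  rw [End.mem_eigenspace_iff]
  by_cases hkn : k ≤ n
  · simpa [Nat.cast_sub (by omega : 1 ≤ 2 * k)] using hdy k hk hkn
  · simp [H.yN_eq_zero k (by omega)]

theorem br_eN_eN_mem_eigenspace (H : IsHTable n t bas eN yN br) (ht : 3 ≤ t)
    (hE : ∀ k, 1 ≤ k → eN k ∈ d.eigenspace (weightE t k : K))
    (ha : 1 ≤ a) (ha' : a ≤ n) (hb : 1 ≤ b) (hb' : b ≤ n) :
    br (eN a) (eN b) ∈ d.eigenspace ((weightE t a + weightE t b : ℕ) : K) := by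
  have hE' : ∀ m, 1 ≤ m → weightE t m = weightE t a + weightE t b →
      eN m ∈ d.eigenspace ((weightE t a + weightE t b : ℕ) : K) := fun m hm hw => hw ▸ hE m hm
  rcases (by omega : b = 1 ∨ b = 2 ∨ 3 ≤ b) with rfl | rfl | hb3
  · rw [H.br_e_e₁ a ha ha']
    split_ifs
    · exact hE' 3 (by omega) (by unfold weightE; split_ifs <;> omega)
    · exact zero_mem _
    · exact hE' _ (by omega) (by unfold weightE; split_ifs <;> omega)
  · rw [H.br_e_e₂ a ha ha']
    split_ifs
    · exact hE' t (by omega) (by unfold weightE; split_ifs <;> omega)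
    · exact zero_mem _
    · exact hE' _ (by omega) (by unfold weightE; split_ifs <;> omega)
  · simp [H.br_e_e a b ha ha' hb3 hb']

theorem br_yN_eN_mem_eigenspace (H : IsHTable n t bas eN yN br) (ht : 2 ≤ t)
    (hY : ∀ k, 1 ≤ k → yN k ∈ d.eigenspace ((2 * k - 1 : ℕ) : K))
    (ha : 1 ≤ a) (ha' : a ≤ n) (hb : 1 ≤ b) (hb' : b ≤ n) :
    br (yN a) (eN b) ∈ d.eigenspace ((2 * a - 1 + weightE t b : ℕ) : K) := by
  have hY' : ∀ m, 1 ≤ m → 2 * m - 1 = 2 * a - 1 + weightE t b →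
      yN m ∈ d.eigenspace ((2 * a - 1 + weightE t b : ℕ) : K) := fun m hm hw => hw ▸ hY m hm
  rcases (by omega : b = 1 ∨ b = 2 ∨ 3 ≤ b) with rfl | rfl | hb3
  · rw [H.br_y_e₁ a ha ha']
    exact hY' _ (by omega) (by unfold weightE; split_ifs <;> omega)
  · rw [H.br_y_e₂ a ha ha']
    split_ifs
    · exact hY' _ (by omega) (by unfold weightE; split_ifs <;> omega)
    · exact hY' _ (by omega) (by unfold weightE; split_ifs <;> omega)
  · simp [H.br_y_e a b ha ha' hb3 hb']

theorem br_eN_yN_mem_eigenspace (H : IsHTable n t bas eN yN br)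
    (hY : ∀ k, 1 ≤ k → yN k ∈ d.eigenspace ((2 * k - 1 : ℕ) : K))
    (ha : 1 ≤ a) (ha' : a ≤ n) (hb : 1 ≤ b) (hb' : b ≤ n) :
    br (eN a) (yN b) ∈ d.eigenspace ((weightE t a + (2 * b - 1) : ℕ) : K) := by
  have hY' : ∀ m, 1 ≤ m → 2 * m - 1 = weightE t a + (2 * b - 1) →
      yN m ∈ d.eigenspace ((weightE t a + (2 * b - 1) : ℕ) : K) := fun m hm hw => hw ▸ hY m hm
  rcases (by omega : b = 1 ∨ 2 ≤ b) with rfl | hb2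
  · rw [H.br_e_y₁ a ha ha']
    split_ifs
    · exact smul_mem _ _ (hY' 2 (by omega) (by unfold weightE; split_ifs; omega))
    · exact zero_mem _
    · exact smul_mem _ _ (hY' a (by omega) (by unfold weightE; split_ifs; omega))
  · simp [H.br_e_y a b ha ha' hb2 hb']

theorem br_yN_yN_mem_eigenspace (H : IsHTable n t bas eN yN br)
    (hE : ∀ k, 1 ≤ k → eN k ∈ d.eigenspace (weightE t k : K))
    (ha : 1 ≤ a) (ha' : a ≤ n) (hb : 1 ≤ b) (hb' : b ≤ n) :
    br (yN a) (yN b) ∈ d.eigenspace ((2 * a - 1 + (2 * b - 1) : ℕ) : K) := by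
  have hE' : ∀ m, 1 ≤ m → weightE t m = 2 * a - 1 + (2 * b - 1) →
      eN m ∈ d.eigenspace ((2 * a - 1 + (2 * b - 1) : ℕ) : K) := fun m hm hw => hw ▸ hE m hm
  rcases (by omega : b = 1 ∨ 2 ≤ b) with rfl | hb2
  · rw [H.br_y_y₁ a ha ha']
    split_ifs
    · exact hE' 1 le_rfl (by unfold weightE; split_ifs <;> omega)
    · exact hE' _ (by omega) (by unfold weightE; split_ifs <;> omega)
  · simp [H.br_y_y a b ha ha' hb2 hb']

theorem leibniz (H : IsHTable n t bas eN yN br) (ht : 3 ≤ t)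
    (hde1 : d (eN 1) = (2 : K) • eN 1) (hde2 : d (eN 2) = (2 * ((t : K) - 2)) • eN 2)
    (hde : ∀ i, 3 ≤ i → i ≤ n → d (eN i) = (2 * ((i : K) - 1)) • eN i)
    (hdy : ∀ i, 1 ≤ i → i ≤ n → d (yN i) = (2 * (i : K) - 1) • yN i) (u v : V) :
    d (br u v) = br (d u) v + br u (d v) := by
  have hE := H.eN_mem_eigenspace (by omega) hde1 hde2 hde
  have hY := H.yN_mem_eigenspace hdy
  refine leibniz_of_basis bas (fun i j => ?_) u v
  rcases i with i | i <;> rcases j with j | j <;> simp only [H.basis_inl, H.basis_inr]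
  · exact leibniz_of_mem_eigenspace (hE _ (by omega)) (hE _ (by omega)) (Nat.cast_add (R := K) _ _ ▸
      H.br_eN_eN_mem_eigenspace ht hE (by omega) (by omega) (by omega) (by omega))
  · exact leibniz_of_mem_eigenspace (hE _ (by omega)) (hY _ (by omega)) (Nat.cast_add (R := K) _ _ ▸
      H.br_eN_yN_mem_eigenspace hY (by omega) (by omega) (by omega) (by omega))
  · exact leibniz_of_mem_eigenspace (hY _ (by omega)) (hE _ (by omega)) (Nat.cast_add (R := K) _ _ ▸
      H.br_yN_eN_mem_eigenspace (by omega) hY (by omega) (by omega) (by omega) (by omega))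
  · exact leibniz_of_mem_eigenspace (hY _ (by omega)) (hY _ (by omega)) (Nat.cast_add (R := K) _ _ ▸
      H.br_yN_yN_mem_eigenspace hE (by omega) (by omega) (by omega) (by omega))

theorem eN_mem (H : IsHTable n t bas eN yN br) {k : ℕ} (hk : 1 ≤ k) (hkn : k ≤ n) : eN k ∈ V₀ := by
  rw [H.eN_eq k ⟨hk, hkn⟩]
  exact subset_span ⟨_, rfl⟩

theorem yN_mem (H : IsHTable n t bas eN yN br) {k : ℕ} (hk : 1 ≤ k) (hkn : k ≤ n) : yN k ∈ V₁ := by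
  rw [H.yN_eq k ⟨hk, hkn⟩]
  exact subset_span ⟨_, rfl⟩

theorem repr_yN (H : IsHTable n t bas eN yN br) (m : ℕ) (j : Fin n) :
    bas.repr (yN m) (.inr j) = if m = j + 1 then 1 else 0 := by
  by_cases h : 1 ≤ m ∧ m ≤ n
  · rw [H.yN_eq m h, bas.repr_self, Finsupp.single_apply]
    simp only [Sum.inr.injEq, Fin.ext_iff, show m - 1 = j ↔ m = j + 1 by omega]
  · rw [H.yN_eq_zero m h, map_zero, Finsupp.zero_apply, if_neg (by omega)]

theorem repr_br_eN_one (H : IsHTable n t bas eN yN br) {v : V} (hv : v ∈ V₁) {j : ℕ}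
    (hj : j + 1 < n) :
    bas.repr (br v (eN 1)) (.inr ⟨j + 1, hj⟩) = bas.repr v (.inr ⟨j, by omega⟩) := by
  have h := bas.apply_eq_repr_smul_of_mem_span Sum.inr hv
    (bas.coord (.inr ⟨j + 1, hj⟩) ∘ₗ br.flip (eN 1)) (k₀ := ⟨j, by omega⟩) fun k hk => ?_
  · simpa [H.basis_inr, H.br_y_e₁ (j + 1) (by omega) (by omega), H.repr_yN] using h
  · simp only [LinearMap.comp_apply, LinearMap.flip_apply, Basis.coord_apply, H.basis_inr,
      H.br_y_e₁ (k + 1) (by omega) (by omega), H.repr_yN]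
    rw [if_neg (by simpa [Fin.ext_iff] using hk)]

theorem repr_br_yN_of_mem (H : IsHTable n t bas eN yN br) (ht : 4 ≤ t) {w : V} (hw : w ∈ V₀)
    {j : ℕ} (hj : j + 1 < n) :
    bas.repr (br (yN (j + 1)) w) (.inr ⟨j + 1, hj⟩) = bas.repr w (.inl ⟨0, by omega⟩) := by
  have h := bas.apply_eq_repr_smul_of_mem_span Sum.inl hw
    (bas.coord (.inr ⟨j + 1, hj⟩) ∘ₗ br (yN (j + 1))) (k₀ := ⟨0, by omega⟩) fun k hk => ?_
  · simpa [H.basis_inl, H.br_y_e₁ (j + 1) (by omega) (by omega), H.repr_yN] using h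
  · have hk1 : (k : ℕ) ≠ 0 := fun h => hk (Fin.ext h)
    simp only [LinearMap.comp_apply, Basis.coord_apply, H.basis_inl]
    rcases (by omega : (k : ℕ) + 1 = 2 ∨ 3 ≤ (k : ℕ) + 1) with h2 | h3
    · rw [h2, H.br_y_e₂ (j + 1) (by omega) (by omega)]
      split_ifs <;> rw [H.repr_yN, if_neg (by dsimp only; omega)]
    · rw [H.br_y_e (j + 1) _ (by omega) (by omega) h3 (by omega), map_zero, Finsupp.zero_apply]

theorem repr_br_yN_one (H : IsHTable n t bas eN yN br) {w : V} (hw : w ∈ V₀) {i p : Fin n}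
    (hi : (i : ℕ) ≠ 1) (hp : (p : ℕ) = max (i : ℕ) 1) :
    bas.repr (br w (yN 1)) (.inr p) = bas.repr w (.inl i) * (1 / 2) := by
  have hφ : ∀ k ≠ i, (bas.coord (.inr p) ∘ₗ br.flip (yN 1)) (bas (.inl k)) = 0 := fun k hk => by
    have hki : (k : ℕ) ≠ i := fun h => hk (Fin.ext h)
    simp only [LinearMap.comp_apply, LinearMap.flip_apply, Basis.coord_apply, H.basis_inl,
      H.br_e_y₁ (k + 1) (by omega) (by omega)]
    split_ifs
    · rw [map_smul, Finsupp.smul_apply, H.repr_yN, if_neg (by omega), smul_zero]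
    · rw [map_zero, Finsupp.zero_apply]
    · rw [map_smul, Finsupp.smul_apply, H.repr_yN, if_neg (by omega), smul_zero]
  refine (bas.apply_eq_repr_smul_of_mem_span Sum.inl hw _ hφ).trans ?_
  simp only [LinearMap.comp_apply, LinearMap.flip_apply, Basis.coord_apply, H.basis_inl,
    H.br_e_y₁ (i + 1) (by omega) (by omega), smul_eq_mul]
  split_ifs
  · rw [map_smul, Finsupp.smul_apply, H.repr_yN, if_pos (by omega), smul_eq_mul, mul_one]
  · omega
  · rw [map_smul, Finsupp.smul_apply, H.repr_yN, if_pos (by omega), smul_eq_mul, mul_one]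

theorem repr_br_eN_two (H : IsHTable n t bas eN yN br) (ht : 2 ≤ t) (htn : t ≤ n) {v : V}
    (hv : v ∈ V₁) :
    bas.repr (br v (eN 2)) (.inr ⟨t - 2, by omega⟩) = bas.repr v (.inr ⟨0, by omega⟩) := by
  have hφ : ∀ k ≠ ⟨0, by omega⟩,
      (bas.coord (.inr ⟨t - 2, by omega⟩) ∘ₗ br.flip (eN 2)) (bas (.inr k)) = 0 := fun k hk => by
    have hk0 : (k : ℕ) ≠ 0 := fun h => hk (Fin.ext h)
    simp only [LinearMap.comp_apply, LinearMap.flip_apply, Basis.coord_apply, H.basis_inr,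
      H.br_y_e₂ (k + 1) (by omega) (by omega), if_neg (by omega : (k : ℕ) + 1 ≠ 1), H.repr_yN]
    rw [if_neg (by omega)]
  have hy₁ : br (yN 1) (eN 2) = yN (t - 1) := by rw [H.br_y_e₂ 1 le_rfl (by omega), if_pos rfl]
  refine (bas.apply_eq_repr_smul_of_mem_span Sum.inr hv _ hφ).trans ?_
  simp only [LinearMap.comp_apply, LinearMap.flip_apply, Basis.coord_apply, H.basis_inr,
    zero_add, hy₁, H.repr_yN, smul_eq_mul]
  rw [if_pos (by omega), mul_one]

theorem br_eN_two_eq_zero (H : IsHTable n t bas eN yN br) (hn : 2 ≤ n) {v : V} (hv : v ∈ V₁) :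
    br (eN 2) v = 0 := by
  have h := bas.apply_eq_repr_smul_of_mem_span Sum.inr hv (br (eN 2)) (k₀ := ⟨0, by omega⟩)
    fun k hk => by
      rw [H.basis_inr]
      have hk0 : (k : ℕ) ≠ 0 := fun h => hk (Fin.ext h)
      exact H.br_e_y 2 _ (by omega) hn (by omega) (by omega)
  simpa [H.basis_inr, H.br_e_y₁ 2 (by omega) hn] using h

theorem repr_derivation_yN_succ (H : IsHTable n t bas eN yN br) (ht : 4 ≤ t)
    (hd : IsEvenDerivation bas br d) {j : ℕ} (hj : j + 1 < n) :
    bas.repr (d (yN (j + 2))) (.inr ⟨j + 1, hj⟩) =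
      bas.repr (d (yN (j + 1))) (.inr ⟨j, by omega⟩) +
        bas.repr (d (eN 1)) (.inl ⟨0, by omega⟩) := by
  rw [← H.br_y_e₁ (j + 1) (by omega) (by omega), hd.leibniz, map_add, Finsupp.add_apply,
    H.repr_br_eN_one (hd.mapsTo_odd _ (H.yN_mem (by omega) (by omega))) hj,
    H.repr_br_yN_of_mem ht (hd.mapsTo_even _ (H.eN_mem le_rfl (by omega))) hj]

theorem repr_derivation_yN (H : IsHTable n t bas eN yN br) (ht : 4 ≤ t)
    (hd : IsEvenDerivation bas br d) {j : ℕ} (hj : j < n) :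
    bas.repr (d (yN (j + 1))) (.inr ⟨j, hj⟩) =
      bas.repr (d (yN 1)) (.inr ⟨0, by omega⟩) +
        j * bas.repr (d (eN 1)) (.inl ⟨0, by omega⟩) := by
  induction j with
  | zero => simp
  | succ j ih =>
    rw [H.repr_derivation_yN_succ ht hd hj, ih (by omega)]
    push_cast
    ring

theorem derivation_eN_two_eq_smul (H : IsHTable n t bas eN yN br) [NeZero (2 : K)] (hn : 2 ≤ n)
    (hd : IsEvenDerivation bas br d) :
    d (eN 2) = bas.repr (d (eN 2)) (.inl ⟨1, hn⟩) • eN 2 := by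
  have he₂ : eN 2 = bas (.inl ⟨1, hn⟩) := H.eN_eq 2 ⟨by omega, hn⟩
  have hde₂ := hd.mapsTo_even _ (H.eN_mem (by omega) hn)
  have hzero : br (d (eN 2)) (yN 1) = 0 := by
    have h := hd.leibniz (eN 2) (yN 1)
    rwa [H.br_e_y₁ 2 (by omega) hn, if_neg (by omega), if_pos rfl, map_zero,
      H.br_eN_two_eq_zero hn (hd.mapsTo_odd _ (H.yN_mem le_rfl (by omega))), add_zero,
      eq_comm] at h
  have hcoeff : ∀ i : Fin n, (i : ℕ) ≠ 1 → bas.repr (d (eN 2)) (.inl i) = 0 := fun i hi => by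
    have h := H.repr_br_yN_one hde₂ hi (p := ⟨max (i : ℕ) 1, by omega⟩) rfl
    simpa [hzero, two_ne_zero] using h
  set c := bas.repr (d (eN 2)) (.inl ⟨1, hn⟩)
  conv_rhs => rw [he₂]
  refine bas.ext_elem fun i => ?_
  rcases i with i | j
  · by_cases hi : (i : ℕ) = 1
    · obtain rfl : i = ⟨1, hn⟩ := Fin.ext hi
      simp [c]
    · simp [hcoeff i hi, Fin.ext_iff, hi]
  · simp [bas.repr_eq_zero_of_mem_span Sum.inl hde₂ (i := .inr j) (by simp)]

theorem derivation_eN_two (H : IsHTable n t bas eN yN br) [NeZero (2 : K)] (ht : 4 ≤ t)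
    (htn : t ≤ n) (hd : IsEvenDerivation bas br d) :
    d (eN 2) = (((t : K) - 2) * bas.repr (d (eN 1)) (.inl ⟨0, by omega⟩)) • eN 2 := by
  have he₂ := H.derivation_eN_two_eq_smul (by omega) hd
  have hy : yN (t - 2 + 1) = br (yN 1) (eN 2) := by
    rw [H.br_y_e₂ 1 le_rfl (by omega), if_pos rfl]
    congr 1
    omega
  have hcoord := H.repr_derivation_yN ht hd (j := t - 2) (by omega)
  rw [hy, hd.leibniz, map_add, Finsupp.add_apply,
    H.repr_br_eN_two (by omega) htn (hd.mapsTo_odd _ (H.yN_mem le_rfl (by omega))), he₂,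
    map_smul, ← hy, map_smul, Finsupp.smul_apply, H.repr_yN, if_pos rfl, smul_eq_mul, mul_one,
    Nat.cast_sub (by omega)] at hcoord
  rw [he₂]
  congr 1
  push_cast at hcoord
  linear_combination hcoord

end IsHTable

/-- For N = H(0,…,0,β_t = 1,0,…,0,0,0) (4 ≤ t ≤ n): the map d given by
d(e₁)=2e₁, d(e₂)=2(t-2)e₂, d(e_i)=2(i-1)e_i, d(y_i)=(2i-1)y_i is a non-nilpotent
even derivation, and every even derivation d' satisfies d'(e₂) = 2(t-2)a₁e₂ where
2a₁ is the coefficient of e₁ in d'(e₁). -/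
theorem statement19 {V : Type*} [AddCommGroup V] [Module ℂ V]
    (n t : ℕ) (hn : 3 ≤ n) (ht1 : 4 ≤ t) (ht2 : t ≤ n)
    (bas : Module.Basis (Fin n ⊕ Fin n) ℂ V)
    (eN yN : ℕ → V)
    (heN : ∀ k (h : 1 ≤ k ∧ k ≤ n), eN k = bas (Sum.inl ⟨k - 1, by omega⟩))
    (heN0 : ∀ k, ¬(1 ≤ k ∧ k ≤ n) → eN k = 0)
    (hyN : ∀ k (h : 1 ≤ k ∧ k ≤ n), yN k = bas (Sum.inr ⟨k - 1, by omega⟩))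
    (hyN0 : ∀ k, ¬(1 ≤ k ∧ k ≤ n) → yN k = 0)
    (br : V →ₗ[ℂ] V →ₗ[ℂ] V)
    -- multiplication table of N:
    (hee1 : ∀ i, 1 ≤ i → i ≤ n →
      br (eN i) (eN 1) = if i = 1 then eN 3 else if i = 2 then 0 else eN (i + 1))
    (hee2 : ∀ i, 1 ≤ i → i ≤ n →
      br (eN i) (eN 2) = if i = 1 then eN t else if i = 2 then 0 else eN (i + t - 2))
    (hee0 : ∀ i j, 1 ≤ i → i ≤ n → 3 ≤ j → j ≤ n → br (eN i) (eN j) = 0)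
    (hye1 : ∀ j, 1 ≤ j → j ≤ n → br (yN j) (eN 1) = yN (j + 1))
    (hye2 : ∀ j, 1 ≤ j → j ≤ n →
      br (yN j) (eN 2) = if j = 1 then yN (t - 1) else yN (j + t - 2))
    (hye0 : ∀ j i, 1 ≤ j → j ≤ n → 3 ≤ i → i ≤ n → br (yN j) (eN i) = 0)
    (hey1 : ∀ i, 1 ≤ i → i ≤ n → br (eN i) (yN 1) =
      if i = 1 then (1 / 2 : ℂ) • yN 2 else if i = 2 then 0 else (1 / 2 : ℂ) • yN i)
    (hey0 : ∀ i j, 1 ≤ i → i ≤ n → 2 ≤ j → j ≤ n → br (eN i) (yN j) = 0)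
    (hyy1 : ∀ j, 1 ≤ j → j ≤ n →
      br (yN j) (yN 1) = if j = 1 then eN 1 else eN (j + 1))
    (hyy0 : ∀ j k, 1 ≤ j → j ≤ n → 2 ≤ k → k ≤ n → br (yN j) (yN k) = 0)
    -- the map d:
    (d : Module.End ℂ V)
    (hde1 : d (eN 1) = (2 : ℂ) • eN 1)
    (hde2 : d (eN 2) = (2 * ((t : ℂ) - 2)) • eN 2)
    (hde : ∀ i, 3 ≤ i → i ≤ n → d (eN i) = (2 * ((i : ℂ) - 1)) • eN i)
    (hdy : ∀ i, 1 ≤ i → i ≤ n → d (yN i) = (2 * (i : ℂ) - 1) • yN i) :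
    -- d is a non-nilpotent even derivation of N:
    (∀ u v : V, d (br u v) = br (d u) v + br u (d v)) ∧
    (¬ ∃ k : ℕ, d ^ k = 0) ∧
    -- every even derivation d' of N satisfies d'(e₂) = 2(t-2)a₁e₂:
    (∀ d' : Module.End ℂ V,
      (∀ x ∈ Submodule.span ℂ (Set.range fun i : Fin n => bas (Sum.inl i)),
        d' x ∈ Submodule.span ℂ (Set.range fun i : Fin n => bas (Sum.inl i))) →
      (∀ x ∈ Submodule.span ℂ (Set.range fun j : Fin n => bas (Sum.inr j)),
        d' x ∈ Submodule.span ℂ (Set.range fun j : Fin n => bas (Sum.inr j))) →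
      (∀ u v : V, d' (br u v) = br (d' u) v + br u (d' v)) →
      ∃ a1 : ℂ, bas.repr (d' (eN 1)) (Sum.inl ⟨0, by omega⟩) = 2 * a1 ∧
        d' (eN 2) = (2 * ((t : ℂ) - 2) * a1) • eN 2) := by
  have H : IsHTable n t bas eN yN br :=
    ⟨heN, heN0, hyN, hyN0, hee1, hee2, hee0, hye1, hye2, hye0, hey1, hey0, hyy1, hyy0⟩
  refine ⟨H.leibniz (by omega) hde1 hde2 hde hdy, fun hnil => ?_, fun d' hd'₀ hd'₁ hd' => ?_⟩
  · have he₁ : d.HasEigenvector 2 (eN 1) :=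
      ⟨End.mem_eigenspace_iff.2 hde1, by rw [heN 1 ⟨le_rfl, by omega⟩]; exact bas.ne_zero _⟩
    exact two_ne_zero
      ((End.hasEigenvalue_of_hasEigenvector he₁).isNilpotent_of_isNilpotent hnil).eq_zero
  · refine ⟨bas.repr (d' (eN 1)) (.inl ⟨0, by omega⟩) / 2, (mul_div_cancel₀ _ two_ne_zero).symm, ?_⟩
    rw [H.derivation_eN_two ht1 ht2 ⟨hd'₀, hd'₁, hd'⟩]
    congr 1
    ring
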